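/- Let k be a perfect field of characteristic p > 0 and A a finite-dimensional k-algebra. For every n ≥ 1, the orthogonal space of T_n(T A) in the trivial extension T A with respect to the canonical symmetrising form ⟨(a,f),(b,g)⟩ = f(b) + g(a) equals {0} ⊕ Ann_{Hom_k(A,k)}(T_n(A)); that is, T_n(T A)^⊥ = {(0,f) : f ∈ Hom_k(A,k) and f(x) = 0 for all x ∈ T_n(A)}. -/

import Mathlib

/-! The `A`-bimodule structure on the `k`-linear dual `Hom_k(A, k)` of a `k`-algebra `A`,
given by `(a · f · b) (x) = f (b * x * a)`, and the resulting trivial extension algebra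
`T A = TrivSqZeroExt A (Module.Dual k A)`. -/

section DualBimodule

variable {k A : Type*} [CommSemiring k] [Semiring A] [Algebra k A]

noncomputable instance Module.Dual.leftAlgebraSMul : SMul A (Module.Dual k A) :=
  ⟨fun a f => f ∘ₗ LinearMap.mulRight k a⟩

noncomputable instance Module.Dual.rightAlgebraSMul : SMul Aᵐᵒᵖ (Module.Dual k A) :=
  ⟨fun b f => f ∘ₗ LinearMap.mulLeft k b.unop⟩

@[simp] theorem Module.Dual.leftAlgebraSMul_apply (a : A) (f : Module.Dual k A) (x : A) :
    (a • f) x = f (x * a) := rfl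

@[simp] theorem Module.Dual.rightAlgebraSMul_apply (b : Aᵐᵒᵖ) (f : Module.Dual k A) (x : A) :
    (b • f) x = f (b.unop * x) := rfl

noncomputable instance Module.Dual.leftAlgebraModule : Module A (Module.Dual k A) where
  one_smul f := LinearMap.ext fun x => by simp
  mul_smul a b f := LinearMap.ext fun x => by simp [mul_assoc]
  smul_zero a := LinearMap.ext fun x => rfl
  smul_add a f g := LinearMap.ext fun x => rfl
  add_smul a b f := LinearMap.ext fun x => by simp [mul_add]
  zero_smul f := LinearMap.ext fun x => by simp

noncomputable instance Module.Dual.rightAlgebraModule : Module Aᵐᵒᵖ (Module.Dual k A) where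
  one_smul f := LinearMap.ext fun x => by simp
  mul_smul a b f := LinearMap.ext fun x => by simp [mul_assoc]
  smul_zero a := LinearMap.ext fun x => rfl
  smul_add a f g := LinearMap.ext fun x => rfl
  add_smul a b f := LinearMap.ext fun x => by simp [add_mul]
  zero_smul f := LinearMap.ext fun x => by simp

instance : SMulCommClass A Aᵐᵒᵖ (Module.Dual k A) :=
  ⟨fun a b f => LinearMap.ext fun x => by simp [mul_assoc]⟩

instance : IsScalarTower k A (Module.Dual k A) :=
  ⟨fun c a f => LinearMap.ext fun x => by
    simp only [Module.Dual.leftAlgebraSMul_apply, LinearMap.smul_apply, smul_eq_mul,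
      mul_smul_comm, map_smul]⟩

instance : IsScalarTower k Aᵐᵒᵖ (Module.Dual k A) :=
  ⟨fun c b f => LinearMap.ext fun x => by
    simp only [Module.Dual.rightAlgebraSMul_apply, LinearMap.smul_apply, smul_eq_mul,
      MulOpposite.unop_smul, smul_mul_assoc, map_smul]⟩

end DualBimodule

/-- The trivial extension `T A = A ⊕ Hom_k(A,k)` of `A` by its `k`-linear dual, with
multiplication `(a, f) · (b, g) = (a b, a · g + f · b)`. -/
noncomputable abbrev TrivExt (k A : Type*) [CommSemiring k] [Semiring A] [Algebra k A] :=
  TrivSqZeroExt A (Module.Dual k A)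

/-- `KB`: the `k`-linear span in `B` of all commutators `a*b - b*a`. -/
def commutatorSpan (k B : Type*) [Field k] [Ring B] [Algebra k B] : Submodule k B :=
  Submodule.span k {x : B | ∃ a b : B, x = a * b - b * a}

/-! Both inclusions are tested against two kinds of elements of `T A`. Every `(0, g)` squares
to zero, so it lies in `T_n(T A)` once `p ^ n ≥ 2`; pairing with it forces the `A`-component
of an orthogonal element to vanish. The algebra maps `inl : A → T A` and `fst : T A → A`
preserve commutators, hence `T_n`, so `inl (T_n A) ⊆ T_n(T A)` and `fst (T_n(T A)) ⊆ T_n A`;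
the first gives the annihilation condition, the second its converse. -/

section commutatorSpan

variable {k B C : Type*} [Field k] [Ring B] [Ring C] [Algebra k B] [Algebra k C]

theorem commutatorSpan_map_le (φ : B →ₐ[k] C) :
    (commutatorSpan k B).map φ.toLinearMap ≤ commutatorSpan k C := by
  rw [commutatorSpan, Submodule.map_span_le]
  rintro _ ⟨a, b, rfl⟩
  exact Submodule.subset_span ⟨φ a, φ b, by simp⟩

theorem AlgHom.pow_mem_commutatorSpan (φ : B →ₐ[k] C) {x : B} {m : ℕ}
    (hx : x ^ m ∈ commutatorSpan k B) : φ x ^ m ∈ commutatorSpan k C := by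
  rw [← map_pow]
  exact commutatorSpan_map_le φ (Submodule.mem_map_of_mem hx)

end commutatorSpan

theorem TrivSqZeroExt.inr_pow_eq_zero {R M : Type*} [Semiring R] [AddCommMonoid M]
    [Module R M] [Module Rᵐᵒᵖ M] [SMulCommClass R Rᵐᵒᵖ M] (m : M) {n : ℕ} (hn : 2 ≤ n) :
    (TrivSqZeroExt.inr m : TrivSqZeroExt R M) ^ n = 0 := by
  obtain ⟨r, rfl⟩ := Nat.exists_eq_add_of_le hn
  rw [pow_add, sq, TrivSqZeroExt.inr_mul_inr, zero_mul]

theorem Tn_perp_trivExt_eq_ann_general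
    (k A : Type*) [Field k] [Ring A] [Algebra k A]
    (p : ℕ) [Fact p.Prime]
    (n : ℕ) (hn : 1 ≤ n) :
    {x : TrivExt k A | ∀ s : TrivExt k A,
        s ^ p ^ n ∈ commutatorSpan k (TrivExt k A) →
        x.snd s.fst + s.snd x.fst = 0} =
    {x : TrivExt k A | x.fst = 0 ∧
        ∀ t : A, t ^ p ^ n ∈ commutatorSpan k A → x.snd t = 0} := by
  have two_le : 2 ≤ p ^ n :=
    (Fact.out : p.Prime).two_le.trans (Nat.le_self_pow (by omega) p)
  ext x
  simp only [Set.mem_ofPred_eq]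
  constructor
  · intro hx
    have fst_eq_zero : x.fst = 0 := by
      refine (Module.forall_dual_apply_eq_zero_iff k x.fst).mp fun g => ?_
      have hg := hx (.inr g) (by
        rw [TrivSqZeroExt.inr_pow_eq_zero g two_le]
        exact Submodule.zero_mem _)
      rwa [TrivSqZeroExt.fst_inr, map_zero, zero_add, TrivSqZeroExt.snd_inr] at hg
    refine ⟨fst_eq_zero, fun t ht => ?_⟩
    have ht' := hx (.inl t)
      ((TrivSqZeroExt.inlAlgHom k A (Module.Dual k A)).pow_mem_commutatorSpan ht)
    rwa [TrivSqZeroExt.snd_inl, LinearMap.zero_apply, add_zero] at ht'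
  · rintro ⟨fst_eq_zero, hann⟩ s hs
    rw [fst_eq_zero, map_zero, add_zero]
    exact hann s.fst ((TrivSqZeroExt.fstHom k A _).pow_mem_commutatorSpan hs)

/-- For a finite-dimensional algebra `A` over a perfect field `k` of characteristic
`p > 0` and `n ≥ 1`, the orthogonal space of `T_n(T A)` in the trivial extension
`T A`, with respect to the canonical symmetrising form `⟨(a,f),(b,g)⟩ = f(b) + g(a)`,
equals `{0} ⊕ Ann_{Hom_k(A,k)}(T_n(A))`. -/
theorem Tn_perp_trivExt_eq_ann
    (k A : Type*) [Field k] [Ring A] [Algebra k A] [FiniteDimensional k A]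
    (p : ℕ) [Fact p.Prime] [CharP k p] [ExpChar k p] [PerfectRing k p]
    (n : ℕ) (hn : 1 ≤ n) :
    {x : TrivExt k A | ∀ s : TrivExt k A,
        s ^ p ^ n ∈ commutatorSpan k (TrivExt k A) →
        x.snd s.fst + s.snd x.fst = 0} =
    {x : TrivExt k A | x.fst = 0 ∧
        ∀ t : A, t ^ p ^ n ∈ commutatorSpan k A → x.snd t = 0} :=
  Tn_perp_trivExt_eq_ann_general k A p n hn
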